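/- arXiv:2508.08260 — 3 statements merged into one kernel-verified Lean document; each statement's English description precedes it below -/
import Mathlib

section
/- Let (X,d) be a metric space and K a nonempty subset of X. Let A, B, S, T be selfmaps of K. Suppose there exist r ∈ [0,1) and a function ψ satisfying Condition-A such that for all x, y ∈ K: ψ(d(Sx,Ty), d(Sx,Ty)) ≤ r · max{ψ(d(Ax,By), d(Ax,Sx)), ψ(d(Ax,By), d(By,Ty)), ψ(d(Ax,Sx), d(By,Ty)), ψ(d(By,Ty), d(Ax,Sx)), min{ψ(d(By,Sx), d(Ax,Sx)), ψ(d(Ax,Ty), d(By,Ty))}, min{ψ(d(By,Sx), d(By,Ty)), ψ(d(Ax,Ty), d(Ax,Sx))}}. Assume the pairs (A,S) and (B,T) are weakly compatible, T(K) is contained in A(K), and the closure of S(K) is contained in B(K). If at least one of the sets T(K), closure of S(K), A(K), or B(K) is complete, then A, B, S and T have a unique common fixed point. -/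
/-!
The inclusions `T(K) ⊆ A(K)` and `S(K) ⊆ B(K)` give a Jungck sequence `y₂ₙ = B x₂ₙ₊₁`,
`y₂ₙ₊₁ = T x₂ₙ₊₁ = A x₂ₙ₊₂`, `y₂ₙ₊₂ = S x₂ₙ₊₂` with all `xₙ ∈ K`. The contractive condition
makes the consecutive distances of `y` decrease to `0`; applied to pairs `y₂ₖ₊₂, y₂ₘ₊₁` at
distance close to some `ε > 0` arbitrarily far out, it gives `ψ(ε, ε) ≤ r ψ(ε, 0)` in the limit,
so `ε = 0` and `y` is Cauchy. Completeness of one of the four sets gives a limit `z`, which is a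
coincidence value of both pairs `(A, S)` and `(B, T)`. Weak compatibility moves the coincidence to
`z` itself, and the contractive condition at coincidence points makes `z` a common fixed point,
unique for the same reason.
-/

open Set Filter
open scoped NNReal Topology

/-- A two-variable auxiliary function satisfying Condition-A. -/
def ConditionA (ψ : ℝ≥0 → ℝ≥0 → ℝ≥0) : Prop :=
  Continuous (Function.uncurry ψ) ∧
  (∀ t, Monotone fun s => ψ s t) ∧
  (∀ s, Monotone fun t => ψ s t) ∧
  ψ 0 0 = 0 ∧
  ∀ t, ψ t 0 = 0 → t = 0

namespace ConditionA

variable {ψ : ℝ≥0 → ℝ≥0 → ℝ≥0} {r : ℝ≥0}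

theorem mono (hψ : ConditionA ψ) {a b c e : ℝ≥0} (hac : a ≤ c) (hbe : b ≤ e) :
    ψ a b ≤ ψ c e :=
  (hψ.2.1 b hac).trans (hψ.2.2.1 c hbe)

theorem eq_zero_of_le_mul (hψ : ConditionA ψ) (hr : r < 1) {t : ℝ≥0}
    (h : ψ t t ≤ r * ψ t t) : t = 0 := by
  have hdiag : ψ t t = 0 := by
    by_contra hne
    exact h.not_gt (mul_lt_of_lt_one_left (pos_iff_ne_zero.2 hne) hr)
  exact hψ.2.2.2.2 t (le_antisymm ((hψ.mono le_rfl zero_le).trans hdiag.le) zero_le)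

theorem tendsto (hψ : ConditionA ψ) {ι : Type*} {l : Filter ι} {f g : ι → ℝ≥0} {a b : ℝ≥0}
    (hf : Tendsto f l (𝓝 a)) (hg : Tendsto g l (𝓝 b)) :
    Tendsto (fun i => ψ (f i) (g i)) l (𝓝 (ψ a b)) :=
  (hψ.1.tendsto (a, b)).comp (hf.prodMk_nhds hg)

theorem eq_zero_of_tendsto (hψ : ConditionA ψ) (hr : r < 1) {ι : Type*} {l : Filter ι}
    [l.NeBot] {f g h : ι → ℝ≥0} {t b : ℝ≥0} (hf : Tendsto f l (𝓝 t))
    (hg : Tendsto g l (𝓝 t)) (hh : Tendsto h l (𝓝 b)) (hbt : b ≤ t)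
    (hle : ∀ᶠ i in l, ψ (f i) (f i) ≤ r * ψ (g i) (h i)) : t = 0 := by
  refine hψ.eq_zero_of_le_mul hr ?_
  calc ψ t t ≤ r * ψ t b :=
        le_of_tendsto_of_tendsto (hψ.tendsto hf hf) ((hψ.tendsto hg hh).const_mul r) hle
    _ ≤ r * ψ t t := mul_le_mul_right (hψ.mono le_rfl hbt) r

theorem le_of_le_mul_max (hψ : ConditionA ψ) (hr : r < 1) {s t : ℝ≥0}
    (h : ψ t t ≤ r * ψ (max s t) (max s t)) : t ≤ s := by
  by_contra! hst
  rw [max_eq_right hst.le] at h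
  simp [hψ.eq_zero_of_le_mul hr h] at hst

theorem tendsto_zero_of_le_mul (hψ : ConditionA ψ) (hr : r < 1) {d : ℕ → ℝ≥0}
    (hd : Antitone d) (h : ∀ n, ψ (d (n + 1)) (d (n + 1)) ≤ r * ψ (d n) (d n)) :
    Tendsto d atTop (𝓝 0) := by
  have hlim := tendsto_atTop_ciInf hd (OrderBot.bddBelow _)
  rwa [hψ.eq_zero_of_tendsto hr (hlim.comp (tendsto_add_atTop_nat 1)) hlim hlim le_rfl
    (Eventually.of_forall h)] at hlim

end ConditionA

theorem nndist_triangle4 {X : Type*} [PseudoMetricSpace X] (x y z w : X) :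
    nndist x w ≤ nndist x y + nndist y z + nndist z w :=
  dist_triangle4 x y z w

section Sequences

variable {X : Type*} [PseudoMetricSpace X] {y : ℕ → X}

theorem exists_lt_le_nndist_le_add {p q : ℕ} {ε δ : ℝ≥0} (hpq : p < q)
    (hε : ε ≤ nndist (y p) (y q)) (hδ : ∀ n ≥ p, nndist (y n) (y (n + 1)) ≤ δ) :
    ∃ q' > p, ε ≤ nndist (y p) (y q') ∧ nndist (y p) (y q') ≤ ε + δ := by
  classical
  have hex : ∃ j, ε ≤ nndist (y p) (y (p + j + 1)) :=
    ⟨q - p - 1, by rwa [show p + (q - p - 1) + 1 = q by omega]⟩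
  refine ⟨p + Nat.find hex + 1, by omega, Nat.find_spec hex, ?_⟩
  rcases hj : Nat.find hex with _ | j
  · simpa using (hδ p le_rfl).trans le_add_self
  · have hlt : nndist (y p) (y (p + j + 1)) < ε := lt_of_not_ge (Nat.find_min hex (by omega))
    calc nndist (y p) (y (p + (j + 1) + 1))
        ≤ nndist (y p) (y (p + j + 1)) + nndist (y (p + j + 1)) (y (p + j + 1 + 1)) :=
          nndist_triangle _ _ _
      _ ≤ ε + δ := add_le_add hlt.le (hδ _ (by omega))

theorem exists_even_odd_nndist_near (hanti : Antitone fun n => nndist (y n) (y (n + 1)))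
    {ε : ℝ≥0} {N q : ℕ} (hq : N + 1 < q) (hε : ε ≤ nndist (y (N + 1)) (y q)) :
    ∃ k m, N ≤ 2 * k + 1 ∧ N ≤ 2 * m ∧
      ε ≤ nndist (y (2 * k + 2)) (y (2 * m + 1)) + 2 * nndist (y N) (y (N + 1)) ∧
      nndist (y (2 * k + 2)) (y (2 * m + 1)) ≤ ε + 3 * nndist (y N) (y (N + 1)) := by
  have hshift {p p' : ℕ} (h₁ : p ≤ p') (h₂ : p' ≤ p + 1) :
      nndist (y p) (y p') ≤ nndist (y p) (y (p + 1)) := by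
    obtain rfl | rfl : p' = p ∨ p' = p + 1 := by omega
    exacts [by simp, le_rfl]
  obtain ⟨q', hq', hlo, hhi⟩ :=
    exists_lt_le_nndist_le_add hq hε fun n hn => hanti (by omega : N ≤ n)
  obtain ⟨k, hk₁, hk₂⟩ : ∃ k, N + 1 ≤ 2 * k + 2 ∧ 2 * k + 2 ≤ N + 1 + 1 :=
    ⟨N / 2, by omega, by omega⟩
  obtain ⟨m, hm₁, hm₂⟩ : ∃ m, q' ≤ 2 * m + 1 ∧ 2 * m + 1 ≤ q' + 1 := ⟨q' / 2, by omega, by omega⟩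
  have hk := (hshift hk₁ hk₂).trans (hanti (Nat.le_succ N))
  have hm := (hshift hm₁ hm₂).trans (hanti (by omega : N ≤ q'))
  refine ⟨k, m, by omega, by omega, ?_, ?_⟩
  · calc ε ≤ nndist (y (N + 1)) (y q') := hlo
      _ ≤ nndist (y (N + 1)) (y (2 * k + 2)) + nndist (y (2 * k + 2)) (y (2 * m + 1)) +
          nndist (y (2 * m + 1)) (y q') := nndist_triangle4 _ _ _ _
      _ ≤ _ := by rw [nndist_comm (y (2 * m + 1))]; linear_combination hk + hm
  · calc nndist (y (2 * k + 2)) (y (2 * m + 1))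
        ≤ nndist (y (2 * k + 2)) (y (N + 1)) + nndist (y (N + 1)) (y q') +
          nndist (y q') (y (2 * m + 1)) := nndist_triangle4 _ _ _ _
      _ ≤ _ := by rw [nndist_comm (y (2 * k + 2))]; linear_combination hk + hm + hhi

theorem ConditionA.cauchySeq_of_mixed_parity {ψ : ℝ≥0 → ℝ≥0 → ℝ≥0} {r : ℝ≥0}
    (hψ : ConditionA ψ) (hr : r < 1) (hanti : Antitone fun n => nndist (y n) (y (n + 1)))
    (hd : Tendsto (fun n => nndist (y n) (y (n + 1))) atTop (𝓝 0))
    (hmix : ∀ k m e, nndist (y (2 * k + 1)) (y (2 * k + 2)) ≤ e →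
      nndist (y (2 * m)) (y (2 * m + 1)) ≤ e →
      ψ (nndist (y (2 * k + 2)) (y (2 * m + 1))) (nndist (y (2 * k + 2)) (y (2 * m + 1))) ≤
        r * ψ (nndist (y (2 * k + 2)) (y (2 * m + 1)) + 2 * e) e) :
    CauchySeq y := by
  set d := fun n => nndist (y n) (y (n + 1))
  rw [EMetric.cauchySeq_iff_NNReal]
  by_contra! hfar
  obtain ⟨ε, hε, hfar⟩ := hfar
  have hnear (N : ℕ) : ∃ k m, N ≤ 2 * k + 1 ∧ N ≤ 2 * m ∧
      ε ≤ nndist (y (2 * k + 2)) (y (2 * m + 1)) + 2 * d N ∧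
      nndist (y (2 * k + 2)) (y (2 * m + 1)) ≤ ε + 3 * d N := by
    obtain ⟨q, hq, hεq⟩ := hfar (N + 1)
    rw [edist_comm, edist_nndist, ENNReal.coe_le_coe] at hεq
    exact exists_even_odd_nndist_near hanti
      (hq.lt_of_ne (by rintro rfl; simp [hε.ne'] at hεq)) hεq
  refine hε.ne' (hψ.eq_zero_of_tendsto hr (f := fun N => ε - 2 * d N)
    (g := fun N => ε + 5 * d N) ?_ ?_ hd zero_le (Eventually.of_forall fun N => ?_))
  · simpa using tendsto_const_nhds.sub (hd.const_mul 2) (a := ε)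
  · simpa using tendsto_const_nhds.add (hd.const_mul 5) (a := ε)
  obtain ⟨k, m, hk, hm, hlo, hhi⟩ := hnear N
  calc ψ (ε - 2 * d N) (ε - 2 * d N)
      ≤ ψ (nndist (y (2 * k + 2)) (y (2 * m + 1))) (nndist (y (2 * k + 2)) (y (2 * m + 1))) :=
        hψ.mono (tsub_le_iff_right.2 hlo) (tsub_le_iff_right.2 hlo)
    _ ≤ r * ψ (nndist (y (2 * k + 2)) (y (2 * m + 1)) + 2 * d N) (d N) :=
        hmix k m (d N) (hanti hk) (hanti hm)
    _ ≤ r * ψ (ε + 5 * d N) (d N) :=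
        mul_le_mul_right (hψ.mono (by linear_combination hhi) le_rfl) r

end Sequences

theorem CauchySeq.exists_tendsto_of_subseq_mem {X : Type*} [UniformSpace X] {u : ℕ → X}
    (hu : CauchySeq u) {s : Set X} (hs : IsComplete s) {φ : ℕ → ℕ}
    (hφ : Tendsto φ atTop atTop) (hmem : ∀ n, u (φ n) ∈ s) : ∃ a, Tendsto u atTop (𝓝 a) := by
  obtain ⟨a, -, ha⟩ := cauchySeq_tendsto_of_isComplete hs hmem (hu.comp_tendsto hφ)
  exact ⟨a, tendsto_nhds_of_cauchySeq_of_subseq hu hφ ha⟩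

def contractiveMax (ψ : ℝ≥0 → ℝ≥0 → ℝ≥0) (dAB dAS dBT dBS dAT : ℝ≥0) : ℝ≥0 :=
  max (ψ dAB dAS) (max (ψ dAB dBT) (max (ψ dAS dBT) (max (ψ dBT dAS)
    (max (min (ψ dBS dAS) (ψ dAT dBT)) (min (ψ dBS dBT) (ψ dAT dAS))))))

theorem contractiveMax_swap (ψ : ℝ≥0 → ℝ≥0 → ℝ≥0) (a p q u v : ℝ≥0) :
    contractiveMax ψ a p q u v = contractiveMax ψ a q p v u := by
  simp only [contractiveMax, min_comm (ψ v _), max_left_comm]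

theorem contractiveMax_le {ψ : ℝ≥0 → ℝ≥0 → ℝ≥0} (hψ : ConditionA ψ) {a p q u v L e : ℝ≥0}
    (ha : a ≤ L) (hp : p ≤ e) (hq : q ≤ e) (he : e ≤ L) (huv : u ≤ L ∨ v ≤ L) :
    contractiveMax ψ a p q u v ≤ ψ L e := by
  have hmin : min (ψ u p) (ψ v q) ≤ ψ L e ∧ min (ψ u q) (ψ v p) ≤ ψ L e := by
    rcases huv with hu | hv
    · exact ⟨min_le_of_left_le (hψ.mono hu hp), min_le_of_left_le (hψ.mono hu hq)⟩
    · exact ⟨min_le_of_right_le (hψ.mono hv hq), min_le_of_right_le (hψ.mono hv hp)⟩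
  simp only [contractiveMax, max_le_iff]
  exact ⟨hψ.mono ha hp, hψ.mono ha hq, hψ.mono (hp.trans he) hq, hψ.mono (hq.trans he) hp, hmin⟩

def Contractive {X : Type*} [PseudoMetricSpace X] (K : Set X) (ψ : ℝ≥0 → ℝ≥0 → ℝ≥0)
    (r : ℝ≥0) (A B S T : X → X) : Prop :=
  ∀ x ∈ K, ∀ y ∈ K, ψ (nndist (S x) (T y)) (nndist (S x) (T y)) ≤
    r * contractiveMax ψ (nndist (A x) (B y)) (nndist (A x) (S x)) (nndist (B y) (T y))
      (nndist (B y) (S x)) (nndist (A x) (T y))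

structure IsJungckSeq {X : Type*} (K : Set X) (A B S T : X → X) (x y : ℕ → X) : Prop where
  mem : ∀ n, x n ∈ K
  B_apply : ∀ n, B (x (2 * n + 1)) = y (2 * n)
  T_apply : ∀ n, T (x (2 * n + 1)) = y (2 * n + 1)
  A_apply : ∀ n, A (x (2 * n + 2)) = y (2 * n + 1)
  S_apply : ∀ n, S (x (2 * n + 2)) = y (2 * n + 2)

theorem exists_isJungckSeq {X : Type*} {K : Set X} {A B S T : X → X} (hK : K.Nonempty)
    (hSB : S '' K ⊆ B '' K) (hTA : T '' K ⊆ A '' K) : ∃ x y, IsJungckSeq K A B S T x y := by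
  have hb (p : K) : ∃ q : K, B q = S p := by
    obtain ⟨q, hq, hBq⟩ := hSB ⟨p, p.2, rfl⟩
    exact ⟨⟨q, hq⟩, hBq⟩
  have ha (p : K) : ∃ q : K, A q = T p := by
    obtain ⟨q, hq, hAq⟩ := hTA ⟨p, p.2, rfl⟩
    exact ⟨⟨q, hq⟩, hAq⟩
  choose b hb using hb
  choose a ha using ha
  obtain ⟨p⟩ : Nonempty K := hK.to_subtype
  let w : ℕ → K := fun n => if Even n then (a ∘ b)^[n / 2] p else b ((a ∘ b)^[n / 2] p)
  have htwo (n : ℕ) : w (2 * n) = (a ∘ b)^[n] p := by simp [w]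
  have hodd (n : ℕ) : w (2 * n + 1) = b ((a ∘ b)^[n] p) := by
    simp [w, show (2 * n + 1) / 2 = n by omega, parity_simps]
  have heven (n : ℕ) : w (2 * n + 2) = a (b ((a ∘ b)^[n] p)) := by
    simpa [mul_add, Function.iterate_succ_apply'] using htwo (n + 1)
  refine ⟨fun n => w n, fun n => if Even n then S (w n) else T (w n), fun n => (w n).2,
    ?_, ?_, ?_, ?_⟩
  all_goals intro n; simp [htwo, hodd, heven, ha, hb, parity_simps]

theorem IsJungckSeq.exists_tendsto {X : Type*} [UniformSpace X] {K : Set X}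
    {A B S T : X → X} {x y : ℕ → X} (hxy : IsJungckSeq K A B S T x y) (hy : CauchySeq y)
    (hcomp : IsComplete (T '' K) ∨ IsComplete (closure (S '' K)) ∨
      IsComplete (A '' K) ∨ IsComplete (B '' K)) :
    ∃ z, Tendsto y atTop (𝓝 z) := by
  have hsub (c : ℕ) : Tendsto (fun n => 2 * n + c) atTop atTop :=
    tendsto_atTop_mono (fun n => show n ≤ 2 * n + c by omega) tendsto_id
  rcases hcomp with hc | hc | hc | hc
  · exact hy.exists_tendsto_of_subseq_mem hc (hsub 1)
      fun n => hxy.T_apply n ▸ mem_image_of_mem T (hxy.mem _)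
  · exact hy.exists_tendsto_of_subseq_mem hc (hsub 2)
      fun n => subset_closure (hxy.S_apply n ▸ mem_image_of_mem S (hxy.mem _))
  · exact hy.exists_tendsto_of_subseq_mem hc (hsub 1)
      fun n => hxy.A_apply n ▸ mem_image_of_mem A (hxy.mem _)
  · exact hy.exists_tendsto_of_subseq_mem hc (hsub 0)
      fun n => hxy.B_apply n ▸ mem_image_of_mem B (hxy.mem _)

namespace Contractive

variable {X : Type*} {K : Set X} {ψ : ℝ≥0 → ℝ≥0 → ℝ≥0} {r : ℝ≥0} {A B S T : X → X}
  {x y : ℕ → X}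

section PseudoMetric

variable [PseudoMetricSpace X]

theorem symm (h : Contractive K ψ r A B S T) : Contractive K ψ r B A T S := by
  intro x hx y hy
  have := h y hy x hx
  rwa [contractiveMax_swap, nndist_comm (A y), nndist_comm (S y)] at this

theorem le_mul_of_le (h : Contractive K ψ r A B S T) (hψ : ConditionA ψ) {x y : X}
    (hx : x ∈ K) (hy : y ∈ K) {L e : ℝ≥0} (hAB : nndist (A x) (B y) ≤ L)
    (hAS : nndist (A x) (S x) ≤ e) (hBT : nndist (B y) (T y) ≤ e) (heL : e ≤ L)
    (hBS : nndist (B y) (S x) ≤ L ∨ nndist (A x) (T y) ≤ L) :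
    ψ (nndist (S x) (T y)) (nndist (S x) (T y)) ≤ r * ψ L e :=
  (h x hx y hy).trans (mul_le_mul_right (contractiveMax_le hψ hAB hAS hBT heL hBS) r)

theorem jungck_step_le (h : Contractive K ψ r A B S T) (hψ : ConditionA ψ)
    (hxy : IsJungckSeq K A B S T x y) (n : ℕ) :
    ψ (nndist (y (n + 1)) (y (n + 2))) (nndist (y (n + 1)) (y (n + 2))) ≤
      r * ψ (max (nndist (y n) (y (n + 1))) (nndist (y (n + 1)) (y (n + 2))))
        (max (nndist (y n) (y (n + 1))) (nndist (y (n + 1)) (y (n + 2)))) := by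
  rcases Nat.even_or_odd' n with ⟨k, rfl | rfl⟩
  · set M := max (nndist (y (2 * k)) (y (2 * k + 1))) (nndist (y (2 * k + 1)) (y (2 * k + 2)))
    have := h.le_mul_of_le hψ (hxy.mem (2 * k + 2)) (hxy.mem (2 * k + 1)) (L := M) (e := M)
    rw [hxy.S_apply, hxy.T_apply, hxy.A_apply, hxy.B_apply, nndist_comm (y (2 * k + 2))] at this
    refine this ?_ ?_ ?_ le_rfl (Or.inr ?_) <;> simp [M, nndist_comm]
  · set M := max (nndist (y (2 * k + 1)) (y (2 * k + 2))) (nndist (y (2 * k + 2)) (y (2 * k + 3)))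
    have hB : B (x (2 * k + 3)) = y (2 * k + 2) := hxy.B_apply (k + 1)
    have hT : T (x (2 * k + 3)) = y (2 * k + 3) := hxy.T_apply (k + 1)
    have := h.le_mul_of_le hψ (hxy.mem (2 * k + 2)) (hxy.mem (2 * k + 3)) (L := M) (e := M)
    rw [hxy.S_apply, hT, hxy.A_apply, hB] at this
    refine this ?_ ?_ ?_ le_rfl (Or.inl ?_) <;> simp [M]

theorem jungck_mixed_le (h : Contractive K ψ r A B S T) (hψ : ConditionA ψ)
    (hxy : IsJungckSeq K A B S T x y) (k m : ℕ) {e : ℝ≥0}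
    (hk : nndist (y (2 * k + 1)) (y (2 * k + 2)) ≤ e)
    (hm : nndist (y (2 * m)) (y (2 * m + 1)) ≤ e) :
    ψ (nndist (y (2 * k + 2)) (y (2 * m + 1))) (nndist (y (2 * k + 2)) (y (2 * m + 1))) ≤
      r * ψ (nndist (y (2 * k + 2)) (y (2 * m + 1)) + 2 * e) e := by
  have := h.le_mul_of_le hψ (hxy.mem (2 * k + 2)) (hxy.mem (2 * m + 1))
    (L := nndist (y (2 * k + 2)) (y (2 * m + 1)) + 2 * e) (e := e)
  rw [hxy.S_apply, hxy.T_apply, hxy.A_apply, hxy.B_apply] at this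
  refine this ?_ hk hm (le_add_left (le_mul_of_one_le_left zero_le one_le_two)) (Or.inl ?_)
  · calc nndist (y (2 * k + 1)) (y (2 * m))
        ≤ nndist (y (2 * k + 1)) (y (2 * k + 2)) + nndist (y (2 * k + 2)) (y (2 * m + 1)) +
          nndist (y (2 * m + 1)) (y (2 * m)) := nndist_triangle4 _ _ _ _
      _ ≤ _ := by rw [nndist_comm (y (2 * m + 1))]; linear_combination hk + hm
  · calc nndist (y (2 * m)) (y (2 * k + 2))
        ≤ nndist (y (2 * m)) (y (2 * m + 1)) + nndist (y (2 * m + 1)) (y (2 * k + 2)) :=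
          nndist_triangle _ _ _
      _ ≤ _ := by rw [nndist_comm (y (2 * m + 1))]; linear_combination hm + zero_le (a := e)

theorem cauchySeq (h : Contractive K ψ r A B S T) (hψ : ConditionA ψ)
    (hr : r < 1) (hxy : IsJungckSeq K A B S T x y) : CauchySeq y := by
  have hstep := h.jungck_step_le hψ hxy
  have hanti : Antitone fun n => nndist (y n) (y (n + 1)) :=
    antitone_nat_of_succ_le fun n => hψ.le_of_le_mul_max hr (hstep n)
  refine hψ.cauchySeq_of_mixed_parity hr hanti (hψ.tendsto_zero_of_le_mul hr hanti fun n => ?_)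
    (h.jungck_mixed_le hψ hxy)
  simpa only [max_eq_left (hanti n.le_succ)] using hstep n

end PseudoMetric

variable [MetricSpace X]

theorem eq_of_coincidence (h : Contractive K ψ r A B S T) (hψ : ConditionA ψ) (hr : r < 1)
    {x y : X} (hx : x ∈ K) (hy : y ∈ K) (hAx : A x = S x) (hBy : B y = T y) : S x = T y := by
  refine nndist_eq_zero.1 (hψ.eq_zero_of_le_mul hr (h.le_mul_of_le hψ hx hy ?_ ?_ ?_ le_rfl ?_))
    <;> simp [hAx, hBy, nndist_comm]

theorem eq_of_tendsto (h : Contractive K ψ r A B S T) (hψ : ConditionA ψ) (hr : r < 1)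
    {ι : Type*} {l : Filter ι} [l.NeBot] {x : ι → X} (hxK : ∀ i, x i ∈ K) {z v : X}
    (hA : Tendsto (fun i => A (x i)) l (𝓝 z)) (hS : Tendsto (fun i => S (x i)) l (𝓝 z))
    (hv : v ∈ K) (hBv : B v = z) : T v = z := by
  subst hBv
  set c := nndist (B v) (T v)
  set e := fun i => max (nndist (A (x i)) (S (x i))) c
  have he : Tendsto e l (𝓝 c) := by simpa using (hA.nndist hS).max tendsto_const_nhds
  have hL : Tendsto (fun i => max (max (nndist (A (x i)) (B v)) (nndist (B v) (S (x i)))) (e i))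
      l (𝓝 c) := by
    simpa using ((hA.nndist (tendsto_const_nhds (x := B v))).max
      ((tendsto_const_nhds (x := B v)).nndist hS)).max he
  refine (nndist_eq_zero.1 (hψ.eq_zero_of_tendsto hr (hS.nndist tendsto_const_nhds) hL he le_rfl
    (Eventually.of_forall fun i => h.le_mul_of_le hψ (hxK i) hv ?_ ?_ ?_ ?_ ?_))).symm
    <;> simp [e, c]

theorem exists_coincidence_points (h : Contractive K ψ r A B S T) (hψ : ConditionA ψ)
    (hr : r < 1) (hxy : IsJungckSeq K A B S T x y) {z : X} (hz : Tendsto y atTop (𝓝 z))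
    (hTA : T '' K ⊆ A '' K) (hSB : closure (S '' K) ⊆ B '' K) :
    (∃ u ∈ K, A u = z ∧ S u = z) ∧ ∃ v ∈ K, B v = z ∧ T v = z := by
  have hsub (c : ℕ) : Tendsto (fun n => y (2 * n + c)) atTop (𝓝 z) :=
    hz.comp (tendsto_atTop_mono (fun n => show n ≤ 2 * n + c by omega) tendsto_id)
  have hS : Tendsto (fun n => S (x (2 * n + 2))) atTop (𝓝 z) := by
    simpa only [hxy.S_apply] using hsub 2
  obtain ⟨v, hv, hBv⟩ := hSB (mem_closure_of_tendsto hS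
    (Eventually.of_forall fun n => mem_image_of_mem S (hxy.mem _)))
  have hTv : T v = z := h.eq_of_tendsto hψ hr (fun n => hxy.mem (2 * n + 2))
    (by simpa only [hxy.A_apply] using hsub 1) hS hv hBv
  obtain ⟨u, hu, hAu⟩ := hTA ⟨v, hv, hTv⟩
  have hSu : S u = z := h.symm.eq_of_tendsto hψ hr (fun n => hxy.mem (2 * n + 1))
    (by simpa only [hxy.B_apply, add_zero] using hsub 0)
    (by simpa only [hxy.T_apply] using hsub 1) hu hAu
  exact ⟨⟨u, hu, hAu, hSu⟩, ⟨v, hv, hBv, hTv⟩⟩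

theorem existsUnique_common_fixedPoint (h : Contractive K ψ r A B S T) (hψ : ConditionA ψ)
    (hr : r < 1) (hT : MapsTo T K K) (hAS : ∀ x ∈ K, A x = S x → A (S x) = S (A x))
    (hBT : ∀ x ∈ K, B x = T x → B (T x) = T (B x)) {z u v : X} (hu : u ∈ K) (hAu : A u = z)
    (hSu : S u = z) (hv : v ∈ K) (hBv : B v = z) (hTv : T v = z) :
    ∃! z, z ∈ K ∧ A z = z ∧ B z = z ∧ S z = z ∧ T z = z := by
  have hzK : z ∈ K := hTv ▸ hT hv
  have hAz : A z = S z := by simpa only [hSu, hAu] using hAS u hu (hAu.trans hSu.symm)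
  have hBz : B z = T z := by simpa only [hTv, hBv] using hBT v hv (hBv.trans hTv.symm)
  have hSz : S z = z := (h.eq_of_coincidence hψ hr hzK hv hAz (hBv.trans hTv.symm)).trans hTv
  have hTz : T z = z := (h.eq_of_coincidence hψ hr hu hzK (hAu.trans hSu.symm) hBz).symm.trans hSu
  refine ⟨z, ⟨hzK, hAz.trans hSz, hBz.trans hTz, hSz, hTz⟩, ?_⟩
  rintro w ⟨hw, hAw, -, hSw, -⟩
  simpa only [hSw, hTz] using h.eq_of_coincidence hψ hr hw hzK (hAw.trans hSw.symm) hBz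

end Contractive

theorem stmt_1_general {X : Type*} [MetricSpace X] (K : Set X) (hK : K.Nonempty)
    (A B S T : X → X)
    (hT : MapsTo T K K)
    (r : ℝ≥0) (hr : r < 1)
    (ψ : ℝ≥0 → ℝ≥0 → ℝ≥0) (hψ : ConditionA ψ)
    (hcontr : ∀ x ∈ K, ∀ y ∈ K,
      ψ (nndist (S x) (T y)) (nndist (S x) (T y)) ≤
        r * max (ψ (nndist (A x) (B y)) (nndist (A x) (S x)))
          (max (ψ (nndist (A x) (B y)) (nndist (B y) (T y)))
          (max (ψ (nndist (A x) (S x)) (nndist (B y) (T y)))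
          (max (ψ (nndist (B y) (T y)) (nndist (A x) (S x)))
          (max (min (ψ (nndist (B y) (S x)) (nndist (A x) (S x)))
                    (ψ (nndist (A x) (T y)) (nndist (B y) (T y))))
               (min (ψ (nndist (B y) (S x)) (nndist (B y) (T y)))
                    (ψ (nndist (A x) (T y)) (nndist (A x) (S x)))))))))
    (hAS : ∀ x ∈ K, A x = S x → A (S x) = S (A x))
    (hBT : ∀ x ∈ K, B x = T x → B (T x) = T (B x))
    (hTA : T '' K ⊆ A '' K)
    (hSB : closure (S '' K) ⊆ B '' K)
    (hcomp : IsComplete (T '' K) ∨ IsComplete (closure (S '' K)) ∨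
             IsComplete (A '' K) ∨ IsComplete (B '' K)) :
    ∃! z, z ∈ K ∧ A z = z ∧ B z = z ∧ S z = z ∧ T z = z := by
  have hc : Contractive K ψ r A B S T := hcontr
  obtain ⟨x, y, hxy⟩ := exists_isJungckSeq hK (subset_closure.trans hSB) hTA
  obtain ⟨z, hz⟩ := hxy.exists_tendsto (hc.cauchySeq hψ hr hxy) hcomp
  obtain ⟨⟨u, hu, hAu, hSu⟩, v, hv, hBv, hTv⟩ :=
    hc.exists_coincidence_points hψ hr hxy hz hTA hSB
  exact hc.existsUnique_common_fixedPoint hψ hr hT hAS hBT hu hAu hSu hv hBv hTv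

theorem stmt_1 {X : Type*} [MetricSpace X] (K : Set X) (hK : K.Nonempty)
    (A B S T : X → X)
    (hA : MapsTo A K K) (hB : MapsTo B K K) (hS : MapsTo S K K) (hT : MapsTo T K K)
    (r : ℝ≥0) (hr : r < 1)
    (ψ : ℝ≥0 → ℝ≥0 → ℝ≥0) (hψ : ConditionA ψ)
    (hcontr : ∀ x ∈ K, ∀ y ∈ K,
      ψ (nndist (S x) (T y)) (nndist (S x) (T y)) ≤
        r * max (ψ (nndist (A x) (B y)) (nndist (A x) (S x)))
          (max (ψ (nndist (A x) (B y)) (nndist (B y) (T y)))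
          (max (ψ (nndist (A x) (S x)) (nndist (B y) (T y)))
          (max (ψ (nndist (B y) (T y)) (nndist (A x) (S x)))
          (max (min (ψ (nndist (B y) (S x)) (nndist (A x) (S x)))
                    (ψ (nndist (A x) (T y)) (nndist (B y) (T y))))
               (min (ψ (nndist (B y) (S x)) (nndist (B y) (T y)))
                    (ψ (nndist (A x) (T y)) (nndist (A x) (S x)))))))))
    (hAS : ∀ x ∈ K, A x = S x → A (S x) = S (A x))
    (hBT : ∀ x ∈ K, B x = T x → B (T x) = T (B x))
    (hTA : T '' K ⊆ A '' K)
    (hSB : closure (S '' K) ⊆ B '' K)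
    (hcomp : IsComplete (T '' K) ∨ IsComplete (closure (S '' K)) ∨
             IsComplete (A '' K) ∨ IsComplete (B '' K)) :
    ∃! z, z ∈ K ∧ A z = z ∧ B z = z ∧ S z = z ∧ T z = z :=
  stmt_1_general K hK A B S T hT r hr ψ hψ hcontr hAS hBT hTA hSB hcomp
end

section
/- Let (X,d) be a metric space and K a nonempty subset of X. Let A and T be selfmaps of K. Suppose there exist φ ∈ Φ such that for all x, y ∈ K: d(Tx,Ty) ≤ φ(max{d(Ax,Ay), d(Ax,Tx), d(Ay,Ty), min{d(Ay,Tx), d(Ax,Ty)}}). Assume the pair (A,T) is weakly compatible and the closure of T(K) is contained in A(K). If either T(K) or A(K) is complete, then A and T have a unique common fixed point. -/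
open Set
open scoped NNReal

/-- `φ ∈ Φ`: monotonically increasing, continuous, `0 < φ(t) < t` for `t > 0`. -/
def InPhi (φ : ℝ≥0 → ℝ≥0) : Prop :=
  Monotone φ ∧ Continuous φ ∧ ∀ t, 0 < t → 0 < φ t ∧ φ t < t

/-!
Jungck's iteration: choose `x (n+1) ∈ K` with `A (x (n+1)) = T (x n)` and put `y n = T (x n)`.
The contractive condition at `(x (m+1), x (n+1))` is the same condition for the pair
`(y, y ∘ succ)`; it gives `d(y (n+1), y (n+2)) ≤ φ (d(y n, y (n+1)))`, so the steps of `y` tend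
to `0`, and since `φ ε < ε` with `φ` continuous, small steps keep the tail of `y` in an `ε`-ball:
`y` is Cauchy. Its limit is `p = A u`, and the condition at `(u, x (n+1))` gives `T u = p` in the
limit. At two coincidence points the condition reads `d(Tx, Ty) ≤ φ (d(Tx, Ty))`, so coincidence
values agree; weak compatibility makes `p` a coincidence point, hence `T p = T u = p`.
-/

open Filter Topology

namespace InPhi

variable {φ : ℝ≥0 → ℝ≥0}

theorem eq_zero_of_le_apply (hφ : InPhi φ) {t : ℝ≥0} (h : t ≤ φ t) : t = 0 := by
  by_contra h0
  exact (h.trans_lt (hφ.2.2 t (pos_iff_ne_zero.mpr h0)).2).false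

theorem apply_le (hφ : InPhi φ) (t : ℝ≥0) : φ t ≤ t := by
  rcases eq_zero_or_pos t with rfl | ht
  · by_contra! h
    exact ((hφ.1 (zero_le : (0 : ℝ≥0) ≤ φ 0)).trans_lt (hφ.2.2 _ h).2).false
  · exact (hφ.2.2 t ht).2.le

theorem tendsto_zero_of_succ_le (hφ : InPhi φ) {d : ℕ → ℝ≥0} (hd : ∀ n, d (n + 1) ≤ φ (d n)) :
    Tendsto d atTop (𝓝 0) := by
  have hanti : Antitone d := antitone_nat_of_succ_le fun n => (hd n).trans (hφ.apply_le _)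
  have hlim := tendsto_atTop_ciInf hanti (OrderBot.bddBelow _)
  have hfix : ⨅ n, d n ≤ φ (⨅ n, d n) :=
    le_of_tendsto_of_tendsto' (hlim.comp (tendsto_add_atTop_nat 1))
      ((hφ.2.1.tendsto _).comp hlim) hd
  rwa [hφ.eq_zero_of_le_apply hfix] at hlim

theorem exists_pos_apply_add_add_le (hφ : InPhi φ) {ε : ℝ≥0} (hε : 0 < ε) :
    ∃ δ, 0 < δ ∧ φ (ε + δ) + δ ≤ ε := by
  have hcont : Continuous fun δ => φ (ε + δ) + δ :=
    (hφ.2.1.comp (continuous_const.add continuous_id)).add continuous_id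
  have hlt : φ (ε + 0) + 0 < ε := by simpa using (hφ.2.2 ε hε).2
  have hev : ∀ᶠ δ in 𝓝[>] 0, φ (ε + δ) + δ < ε :=
    nhdsWithin_le_nhds ((hcont.tendsto 0).eventually_lt_const hlt)
  obtain ⟨δ, hδ, hδ0⟩ := (hev.and self_mem_nhdsWithin).exists
  exact ⟨δ, hδ0, hδ.le⟩

end InPhi

def IsPhiContraction {ι X : Type*} [PseudoMetricSpace X] (φ : ℝ≥0 → ℝ≥0) (K : Set ι)
    (A T : ι → X) : Prop :=
  ∀ x ∈ K, ∀ y ∈ K,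
    nndist (T x) (T y) ≤
      φ (max (nndist (A x) (A y))
        (max (nndist (A x) (T x))
        (max (nndist (A y) (T y))
             (min (nndist (A y) (T x)) (nndist (A x) (T y))))))

namespace IsPhiContraction

variable {ι X : Type*} {φ : ℝ≥0 → ℝ≥0} {K : Set ι} {A T : ι → X}

theorem apply_eq_apply_of_coincidence [MetricSpace X] (h : IsPhiContraction φ K A T)
    (hφ : InPhi φ) {x y : ι} (hx : x ∈ K) (hy : y ∈ K) (hAx : A x = T x) (hAy : A y = T y) :
    T x = T y := by
  have hle := h x hx y hy
  rw [hAx, hAy] at hle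
  simp only [nndist_self, nndist_comm (T y) (T x), min_self, zero_le, sup_of_le_right,
    max_self] at hle
  exact nndist_eq_zero.mp (hφ.eq_zero_of_le_apply hle)

end IsPhiContraction

section PhiContractiveSequence

variable {X : Type*} [PseudoMetricSpace X] {φ : ℝ≥0 → ℝ≥0} {y : ℕ → X}

theorem IsPhiContraction.nndist_succ_le (hφ : InPhi φ)
    (hy : IsPhiContraction φ univ y (fun n => y (n + 1))) (n : ℕ) :
    nndist (y (n + 1)) (y (n + 2)) ≤ φ (nndist (y n) (y (n + 1))) := by
  have hle : nndist (y (n + 1)) (y (n + 2)) ≤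
      φ (max (nndist (y n) (y (n + 1))) (nndist (y (n + 1)) (y (n + 2)))) := by
    simpa using hy n trivial (n + 1) trivial
  rcases le_total (nndist (y (n + 1)) (y (n + 2))) (nndist (y n) (y (n + 1))) with hd | hd
  · rwa [max_eq_left hd] at hle
  · rw [max_eq_right hd] at hle
    rw [hφ.eq_zero_of_le_apply hle]
    exact zero_le

theorem IsPhiContraction.tendsto_nndist_succ (hφ : InPhi φ)
    (hy : IsPhiContraction φ univ y (fun n => y (n + 1))) :
    Tendsto (fun n => nndist (y n) (y (n + 1))) atTop (𝓝 0) :=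
  hφ.tendsto_zero_of_succ_le (hy.nndist_succ_le hφ)

theorem IsPhiContraction.nndist_add_le (hφ : InPhi φ)
    (hy : IsPhiContraction φ univ y (fun n => y (n + 1))) {η δ : ℝ≥0}
    (hηδ : φ (η + δ) + δ ≤ η) {N : ℕ} (hN : ∀ n ≥ N, nndist (y n) (y (n + 1)) < δ) (m : ℕ) :
    nndist (y N) (y (N + m)) ≤ η := by
  induction m with
  | zero => simp
  | succ m ih =>
    have hstep : nndist (y N) (y (N + 1)) ≤ δ := (hN N le_rfl).le
    have hmin : min (nndist (y (N + m)) (y (N + 1))) (nndist (y N) (y (N + m + 1))) ≤ η + δ :=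
      calc _ ≤ nndist (y (N + m)) (y (N + 1)) := min_le_left _ _
        _ ≤ nndist (y (N + m)) (y N) + nndist (y N) (y (N + 1)) := nndist_triangle _ _ _
        _ ≤ η + δ := add_le_add (by rwa [nndist_comm]) hstep
    have harg : max (nndist (y N) (y (N + m))) (max (nndist (y N) (y (N + 1)))
        (max (nndist (y (N + m)) (y (N + m + 1)))
          (min (nndist (y (N + m)) (y (N + 1))) (nndist (y N) (y (N + m + 1)))))) ≤ η + δ :=
      max_le (ih.trans le_self_add) <| max_le (hstep.trans le_add_self) <|
        max_le ((hN (N + m) (Nat.le_add_right _ _)).le.trans le_add_self) hmin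
    calc nndist (y N) (y (N + m + 1))
        ≤ nndist (y N) (y (N + 1)) + nndist (y (N + 1)) (y (N + m + 1)) := nndist_triangle _ _ _
      _ ≤ δ + φ (η + δ) := add_le_add hstep ((hy N trivial (N + m) trivial).trans (hφ.1 harg))
      _ ≤ η := by rwa [add_comm]

theorem IsPhiContraction.cauchySeq (hφ : InPhi φ)
    (hy : IsPhiContraction φ univ y (fun n => y (n + 1))) : CauchySeq y := by
  refine Metric.cauchySeq_iff'.mpr fun ε hε => ?_
  lift ε to ℝ≥0 using hε.le
  obtain ⟨η, hη, hηε⟩ := exists_between (α := ℝ≥0) (mod_cast hε)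
  obtain ⟨δ, hδ, hηδ⟩ := hφ.exists_pos_apply_add_add_le hη
  obtain ⟨N, hN⟩ := eventually_atTop.mp ((hy.tendsto_nndist_succ hφ).eventually (Iio_mem_nhds hδ))
  refine ⟨N, fun n hn => ?_⟩
  obtain ⟨m, rfl⟩ := Nat.exists_eq_add_of_le hn
  rw [dist_comm, dist_nndist]
  exact_mod_cast (hy.nndist_add_le hφ hηδ hN m).trans_lt hηε

end PhiContractiveSequence

section JungckSequence

variable {X : Type*} {φ : ℝ≥0 → ℝ≥0} {K : Set X} {A T : X → X} {x : ℕ → X}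

theorem exists_seq_apply_succ_eq (hK : K.Nonempty) (hTA : T '' K ⊆ A '' K) :
    ∃ x : ℕ → X, (∀ n, x n ∈ K) ∧ ∀ n, A (x (n + 1)) = T (x n) := by
  obtain ⟨x₀, hx₀⟩ := hK
  choose f hfK hfA using fun a : K => hTA ⟨a, a.2, rfl⟩
  let s : ℕ → K := fun n => Nat.rec ⟨x₀, hx₀⟩ (fun _ a => ⟨f a, hfK a⟩) n
  exact ⟨fun n => (s n).1, fun n => (s n).2, fun n => hfA (s n)⟩

variable [PseudoMetricSpace X]

theorem exists_tendsto_of_isComplete (hxK : ∀ n, x n ∈ K) (hx : ∀ n, A (x (n + 1)) = T (x n))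
    (hTA : closure (T '' K) ⊆ A '' K) (hcomp : IsComplete (T '' K) ∨ IsComplete (A '' K))
    (hcauchy : CauchySeq fun n => T (x n)) :
    ∃ p ∈ A '' K, Tendsto (fun n => T (x n)) atTop (𝓝 p) := by
  rcases hcomp with hT | hA
  · obtain ⟨p, hp, hlim⟩ := cauchySeq_tendsto_of_isComplete hT (fun n => ⟨x n, hxK n, rfl⟩) hcauchy
    exact ⟨p, hTA (subset_closure hp), hlim⟩
  · exact cauchySeq_tendsto_of_isComplete hA (fun n => ⟨x (n + 1), hxK (n + 1), hx n⟩) hcauchy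

theorem IsPhiContraction.isPhiContraction_seq (h : IsPhiContraction φ K A T)
    (hxK : ∀ n, x n ∈ K) (hx : ∀ n, A (x (n + 1)) = T (x n)) :
    IsPhiContraction φ univ (fun n => T (x n)) (fun n => T (x (n + 1))) :=
  fun m _ n _ => by simpa only [hx] using h _ (hxK (m + 1)) _ (hxK (n + 1))

end JungckSequence

theorem IsPhiContraction.apply_eq_of_tendsto {X : Type*} [MetricSpace X] {φ : ℝ≥0 → ℝ≥0}
    {K : Set X} {A T : X → X} {x : ℕ → X} (h : IsPhiContraction φ K A T) (hφ : InPhi φ)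
    (hxK : ∀ n, x n ∈ K) (hx : ∀ n, A (x (n + 1)) = T (x n)) {p u : X}
    (hlim : Tendsto (fun n => T (x n)) atTop (𝓝 p)) (hu : u ∈ K) (hAu : A u = p) : T u = p := by
  have hlim₁ : Tendsto (fun n => T (x (n + 1))) atTop (𝓝 p) :=
    hlim.comp (tendsto_add_atTop_nat 1)
  have hsteps := (h.isPhiContraction_seq hxK hx).tendsto_nndist_succ hφ
  have hle : ∀ n, nndist (T u) (T (x (n + 1))) ≤
      φ (max (nndist p (T (x n))) (max (nndist p (T u)) (max (nndist (T (x n)) (T (x (n + 1))))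
        (min (nndist (T (x n)) (T u)) (nndist p (T (x (n + 1)))))))) := fun n => by
    simpa only [hAu, hx n] using h u hu (x (n + 1)) (hxK (n + 1))
  have harg : Tendsto (fun n => max (nndist p (T (x n))) (max (nndist p (T u))
      (max (nndist (T (x n)) (T (x (n + 1))))
        (min (nndist (T (x n)) (T u)) (nndist p (T (x (n + 1)))))))) atTop
      (𝓝 (nndist p (T u))) := by
    have hlim' : Tendsto _ atTop (𝓝 (max (nndist p p) (max (nndist p (T u))
        (max 0 (min (nndist p (T u)) (nndist p p)))))) :=
      (tendsto_const_nhds.nndist hlim).max <| tendsto_const_nhds.max <| hsteps.max <|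
        (hlim.nndist tendsto_const_nhds).min (tendsto_const_nhds.nndist hlim₁)
    simpa using hlim'
  have hfix : nndist (T u) p ≤ φ (nndist p (T u)) :=
    le_of_tendsto_of_tendsto' (tendsto_const_nhds.nndist hlim₁) ((hφ.2.1.tendsto _).comp harg) hle
  rw [nndist_comm p] at hfix
  exact nndist_eq_zero.mp (hφ.eq_zero_of_le_apply hfix)

theorem stmt_11_general {X : Type*} [MetricSpace X] (K : Set X) (hK : K.Nonempty)
    (A T : X → X) (hT : MapsTo T K K)
    (φ : ℝ≥0 → ℝ≥0) (hφ : InPhi φ)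
    (hcontr : ∀ x ∈ K, ∀ y ∈ K,
      nndist (T x) (T y) ≤
        φ (max (nndist (A x) (A y))
          (max (nndist (A x) (T x))
          (max (nndist (A y) (T y))
               (min (nndist (A y) (T x)) (nndist (A x) (T y)))))))
    (hAT : ∀ x ∈ K, A x = T x → A (T x) = T (A x))
    (hTA : closure (T '' K) ⊆ A '' K)
    (hcomp : IsComplete (T '' K) ∨ IsComplete (A '' K)) :
    ∃! z, z ∈ K ∧ A z = z ∧ T z = z := by
  have hC : IsPhiContraction φ K A T := hcontr
  obtain ⟨x, hxK, hx⟩ := exists_seq_apply_succ_eq hK (subset_closure.trans hTA)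
  obtain ⟨p, ⟨u, hu, hAu⟩, hlim⟩ := exists_tendsto_of_isComplete hxK hx hTA hcomp
    ((hC.isPhiContraction_seq hxK hx).cauchySeq hφ)
  have hTu : T u = p := hC.apply_eq_of_tendsto hφ hxK hx hlim hu hAu
  have hp : p ∈ K := hTu ▸ hT hu
  have hAu' : A u = T u := hAu.trans hTu.symm
  have hAp : A p = T p := by simpa only [hTu, hAu] using hAT u hu hAu'
  have hTp : T p = p := (hC.apply_eq_apply_of_coincidence hφ hp hu hAp hAu').trans hTu
  refine ⟨p, ⟨hp, hAp.trans hTp, hTp⟩, fun w ⟨hw, hAw, hTw⟩ => ?_⟩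
  calc w = T w := hTw.symm
    _ = T p := hC.apply_eq_apply_of_coincidence hφ hw hp (hAw.trans hTw.symm) hAp
    _ = p := hTp

theorem stmt_11 {X : Type*} [MetricSpace X] (K : Set X) (hK : K.Nonempty)
    (A T : X → X) (hA : MapsTo A K K) (hT : MapsTo T K K)
    (φ : ℝ≥0 → ℝ≥0) (hφ : InPhi φ)
    (hcontr : ∀ x ∈ K, ∀ y ∈ K,
      nndist (T x) (T y) ≤
        φ (max (nndist (A x) (A y))
          (max (nndist (A x) (T x))
          (max (nndist (A y) (T y))
               (min (nndist (A y) (T x)) (nndist (A x) (T y)))))))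
    (hAT : ∀ x ∈ K, A x = T x → A (T x) = T (A x))
    (hTA : closure (T '' K) ⊆ A '' K)
    (hcomp : IsComplete (T '' K) ∨ IsComplete (A '' K)) :
    ∃! z, z ∈ K ∧ A z = z ∧ T z = z :=
  stmt_11_general K hK A T hT φ hφ hcontr hAT hTA hcomp
end

section
/- Let (X,d) be a metric space, K a nonempty subset of X, and A, B, S, T selfmaps of K. Suppose there exist a function ψ satisfying Condition-A and φ ∈ Φ such that the contractive inequality ψ(d(Sx,Ty), d(Sx,Ty)) ≤ φ(max{ψ(d(Ax,By), d(Ax,Sx)), ψ(d(Ax,By), d(By,Ty)), ψ(d(Ax,Sx), d(By,Ty)), ψ(d(By,Ty), d(Ax,Sx)), min{ψ(d(By,Sx), d(Ax,Sx)), ψ(d(Ax,Ty), d(By,Ty))}, min{ψ(d(By,Sx), d(By,Ty)), ψ(d(Ax,Ty), d(Ax,Sx))}}) holds for all x, y ∈ K. Let {xₙ} be a sequence in K and define yₙ by y₂ₙ = Tx₂ₙ = Ax₂ₙ₊₁ and y₂ₙ₊₁ = Sx₂ₙ₊₁ = Bx₂ₙ₊₂ for all n ≥ 0. Then {yₙ}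 is a Cauchy sequence in K. -/
open Set Filter Topology
open scoped NNReal

/-!
For consecutive points, monotonicity of `ψ` turns the contractive inequality into
`ψ(dₙ₊₁,dₙ₊₁) ≤ φ(ψ(c,c))` with `dₙ = d(yₙ,yₙ₊₁)` and `c = max(dₙ,dₙ₊₁)`; since `φ(s) < s`, this
forces `dₙ₊₁ ≤ dₙ`, and the limit `r` of `dₙ` satisfies `ψ(r,r) ≤ φ(ψ(r,r))`, so `r = 0`.
If `yₙ` were not Cauchy, the exits of `y` from `ε`-balls around even points give pairs
`y₂ⱼ₊₁, y₂ᵢ₊₂` at distance tending to `ε`, and then so are all pairs in the contractive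
inequality; in the limit `ψ(ε,0) ≤ ψ(ε,ε) ≤ φ(ψ(ε,0))`, forcing `ε = 0`.
-/

theorem Continuous.tendsto_comp₂ {α β γ ι : Type*} [TopologicalSpace α] [TopologicalSpace β]
    [TopologicalSpace γ] {f : α → β → γ} (hf : Continuous (Function.uncurry f)) {l : Filter ι}
    {u : ι → α} {v : ι → β} {a : α} {b : β} (hu : Tendsto u l (𝓝 a)) (hv : Tendsto v l (𝓝 b)) :
    Tendsto (fun k => f (u k) (v k)) l (𝓝 (f a b)) :=
  (hf.tendsto (a, b)).comp (hu.prodMk_nhds hv)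

theorem Filter.Tendsto.nndist_congr {X ι : Type*} [PseudoMetricSpace X] {l : Filter ι}
    {u v u' v' : ι → X} {ε : ℝ≥0} (h : Tendsto (fun k => nndist (u k) (v k)) l (𝓝 ε))
    (hu : Tendsto (fun k => nndist (u' k) (u k)) l (𝓝 0))
    (hv : Tendsto (fun k => nndist (v' k) (v k)) l (𝓝 0)) :
    Tendsto (fun k => nndist (u' k) (v' k)) l (𝓝 ε) := by
  refine h.congr_dist (squeeze_zero (fun _ => dist_nonneg) (fun k => ?_)
    (NNReal.tendsto_coe.2 (by simpa using hu.add hv)))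
  rw [NNReal.coe_add, coe_nndist, coe_nndist, dist_comm (u' k), dist_comm (v' k)]
  exact dist_dist_dist_le _ _ _ _

theorem InPhi.eq_zero_of_le_apply_s16 {φ : ℝ≥0 → ℝ≥0} (hφ : InPhi φ) {t : ℝ≥0} (h : t ≤ φ t) :
    t = 0 := by
  by_contra ht
  exact (hφ.2.2 t (pos_iff_ne_zero.2 ht)).2.not_ge h

/-- The argument of `φ` in the contractive inequality, with `p = d(Ax,By)`, `a = d(Ax,Sx)`,
`b = d(By,Ty)`, `q = d(By,Sx)` and `r = d(Ax,Ty)`. -/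
def contractiveBound (ψ : ℝ≥0 → ℝ≥0 → ℝ≥0) (p a b q r : ℝ≥0) : ℝ≥0 :=
  max (ψ p a) (max (ψ p b) (max (ψ a b) (max (ψ b a)
    (max (min (ψ q a) (ψ r b)) (min (ψ q b) (ψ r a))))))

theorem tendsto_contractiveBound {ι : Type*} {ψ : ℝ≥0 → ℝ≥0 → ℝ≥0}
    (hψ : Continuous (Function.uncurry ψ)) {l : Filter ι} {p a b q r : ι → ℝ≥0}
    {p₀ a₀ b₀ q₀ r₀ : ℝ≥0} (hp : Tendsto p l (𝓝 p₀)) (ha : Tendsto a l (𝓝 a₀))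
    (hb : Tendsto b l (𝓝 b₀)) (hq : Tendsto q l (𝓝 q₀)) (hr : Tendsto r l (𝓝 r₀)) :
    Tendsto (fun k => contractiveBound ψ (p k) (a k) (b k) (q k) (r k)) l
      (𝓝 (contractiveBound ψ p₀ a₀ b₀ q₀ r₀)) :=
  (hψ.tendsto_comp₂ hp ha).max <| (hψ.tendsto_comp₂ hp hb).max <|
    (hψ.tendsto_comp₂ ha hb).max <| (hψ.tendsto_comp₂ hb ha).max <|
      ((hψ.tendsto_comp₂ hq ha).min (hψ.tendsto_comp₂ hr hb)).max
        ((hψ.tendsto_comp₂ hq hb).min (hψ.tendsto_comp₂ hr ha))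

/-- The contractive inequality at the points `x (2j+1)` and `x (2i+2)`, written in terms of `y`. -/
def ContractiveAlong {X : Type*} [PseudoMetricSpace X] (ψ : ℝ≥0 → ℝ≥0 → ℝ≥0)
    (φ : ℝ≥0 → ℝ≥0) (y : ℕ → X) : Prop :=
  ∀ i j, ψ (nndist (y (2 * j + 1)) (y (2 * i + 2))) (nndist (y (2 * j + 1)) (y (2 * i + 2))) ≤
    φ (contractiveBound ψ (nndist (y (2 * j)) (y (2 * i + 1)))
      (nndist (y (2 * j)) (y (2 * j + 1))) (nndist (y (2 * i + 1)) (y (2 * i + 2)))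
      (nndist (y (2 * i + 1)) (y (2 * j + 1))) (nndist (y (2 * j)) (y (2 * i + 2))))

theorem exists_odd_dist_near_of_le_dist {X : Type*} [PseudoMetricSpace X] {y : ℕ → X} {ε : ℝ}
    (hε : 0 < ε) {N : ℕ} (h : ∃ m ≥ N, ε ≤ dist (y m) (y N)) :
    ∃ j t, N ≤ 2 * j + 1 ∧ N ≤ t ∧
      dist (dist (y (2 * j + 1)) (y N)) ε ≤ dist (y t) (y (t + 1)) := by
  -- `y (N + l)` lies in the `ε`-ball around `y N` and `y (N + l + 1)` outside it, so both are
  -- within one step of its boundary sphere; one of the two has odd index.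
  obtain ⟨m, hNm, hm⟩ := h
  obtain ⟨l, hl, hl₁⟩ := Nat.exists_not_and_succ_of_not_zero_of_exists
    (p := fun l => ε ≤ dist (y (N + l)) (y N)) (by simpa using hε)
    ⟨m - N, by rwa [Nat.add_sub_cancel' hNm]⟩
  simp only [not_le, ← add_assoc] at hl hl₁
  have h₀ := dist_triangle (y (N + l)) (y (N + l + 1)) (y N)
  have h₁ := dist_triangle_left (y (N + l + 1)) (y N) (y (N + l))
  have near₀ : dist (dist (y (N + l)) (y N)) ε ≤ dist (y (N + l)) (y (N + l + 1)) := by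
    rw [Real.dist_eq, abs_le]; constructor <;> linarith
  have near₁ : dist (dist (y (N + l + 1)) (y N)) ε ≤ dist (y (N + l)) (y (N + l + 1)) := by
    rw [Real.dist_eq, abs_le]; constructor <;> linarith
  obtain ⟨j, hj | hj⟩ := Nat.even_or_odd' (N + l)
  · exact ⟨j, N + l, by omega, le_self_add, hj ▸ near₁⟩
  · exact ⟨j, N + l, by omega, le_self_add, hj ▸ near₀⟩

theorem exists_tendsto_nndist_odd_even_of_not_cauchySeq {X : Type*} [PseudoMetricSpace X]
    {y : ℕ → X} (hd : Tendsto (fun n => nndist (y n) (y (n + 1))) atTop (𝓝 0))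
    (hy : ¬CauchySeq y) :
    ∃ ε ≠ 0, ∃ j : ℕ → ℕ, (∀ k, k ≤ j k) ∧
      Tendsto (fun k => nndist (y (2 * j k + 1)) (y (2 * k + 2))) atTop (𝓝 ε) := by
  rw [Metric.cauchySeq_iff'] at hy
  push Not at hy
  obtain ⟨ε, hε, hfar⟩ := hy
  choose j t hj ht hnear using fun k => exists_odd_dist_near_of_le_dist hε (hfar (2 * k + 2))
  have hdt : Tendsto (fun k => dist (y (t k)) (y (t k + 1))) atTop (𝓝 0) := by
    simpa using NNReal.tendsto_coe.2 (hd.comp (tendsto_atTop_mono (fun k => by grind) tendsto_id))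
  refine ⟨ε.toNNReal, by positivity, j, fun k => by grind, NNReal.tendsto_coe.1 ?_⟩
  simp only [coe_nndist, Real.coe_toNNReal _ hε.le]
  exact tendsto_iff_dist_tendsto_zero.2 (squeeze_zero (fun _ => dist_nonneg) hnear hdt)

namespace ConditionA

variable {ψ : ℝ≥0 → ℝ≥0 → ℝ≥0} {φ : ℝ≥0 → ℝ≥0}

theorem apply_le_apply (hψ : ConditionA ψ) {s s' t t' : ℝ≥0} (hs : s ≤ s') (ht : t ≤ t') :
    ψ s t ≤ ψ s' t' :=
  (hψ.2.1 t hs).trans (hψ.2.2.1 s' ht)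

theorem eq_zero_of_apply_self_eq_zero (hψ : ConditionA ψ) {t : ℝ≥0} (h : ψ t t = 0) : t = 0 :=
  hψ.2.2.2.2 t (le_antisymm ((hψ.apply_le_apply le_rfl zero_le).trans h.le) zero_le)

theorem eq_zero_of_apply_le_phi (hψ : ConditionA ψ) (hφ : InPhi φ) {t : ℝ≥0}
    (h : ψ t t ≤ φ (ψ t 0)) : t = 0 :=
  hψ.2.2.2.2 t (hφ.eq_zero_of_le_apply_s16 ((hψ.apply_le_apply le_rfl zero_le).trans h))

theorem contractiveBound_le (hψ : ConditionA ψ) {p a b q r c : ℝ≥0} (hp : p ≤ c) (ha : a ≤ c)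
    (hb : b ≤ c) (hqr : min q r ≤ c) : contractiveBound ψ p a b q r ≤ ψ c c := by
  have hmin : ∀ s t, s ≤ c → t ≤ c → min (ψ q s) (ψ r t) ≤ ψ c c := fun s t hs ht =>
    (min_le_iff.1 hqr).elim (fun hq => min_le_of_left_le (hψ.apply_le_apply hq hs))
      (fun hr => min_le_of_right_le (hψ.apply_le_apply hr ht))
  simp only [contractiveBound, max_le_iff]
  exact ⟨hψ.apply_le_apply hp ha, hψ.apply_le_apply hp hb, hψ.apply_le_apply ha hb,
    hψ.apply_le_apply hb ha, hmin a b ha hb, hmin b a hb ha⟩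

theorem le_and_apply_le_of_apply_le_phi (hψ : ConditionA ψ) (hφ : InPhi φ) {a b M : ℝ≥0}
    (hM : M ≤ ψ (max a b) (max a b)) (h : ψ b b ≤ φ M) : b ≤ a ∧ ψ b b ≤ φ (ψ a a) := by
  have hba : b ≤ a := by
    by_contra! hab
    rw [max_eq_right hab.le] at hM
    have hb : b = 0 := hψ.eq_zero_of_apply_self_eq_zero (hφ.eq_zero_of_le_apply_s16 (h.trans (hφ.1 hM)))
    exact zero_le.not_gt (hb ▸ hab)
  rw [max_eq_left hba] at hM
  exact ⟨hba, h.trans (hφ.1 hM)⟩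

theorem tendsto_zero_of_apply_succ_le (hψ : ConditionA ψ) (hφ : InPhi φ) {d : ℕ → ℝ≥0}
    (h : ∀ n, d (n + 1) ≤ d n ∧ ψ (d (n + 1)) (d (n + 1)) ≤ φ (ψ (d n) (d n))) :
    Tendsto d atTop (𝓝 0) := by
  have hd := tendsto_atTop_ciInf (antitone_nat_of_succ_le fun n => (h n).1) (OrderBot.bddBelow _)
  have hψd := hψ.1.tendsto_comp₂ hd hd
  have hlim : ψ (⨅ n, d n) (⨅ n, d n) ≤ φ (ψ (⨅ n, d n) (⨅ n, d n)) :=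
    le_of_tendsto_of_tendsto' (hψd.comp (tendsto_add_atTop_nat 1)) ((hφ.2.1.tendsto _).comp hψd)
      fun n => (h n).2
  rwa [hψ.eq_zero_of_apply_self_eq_zero (hφ.eq_zero_of_le_apply_s16 hlim)] at hd

variable {X : Type*} [PseudoMetricSpace X] {y : ℕ → X}

theorem nndist_succ_le_of_contractiveAlong (hψ : ConditionA ψ) (hφ : InPhi φ)
    (h : ContractiveAlong ψ φ y) (n : ℕ) :
    nndist (y (n + 1)) (y (n + 2)) ≤ nndist (y n) (y (n + 1)) ∧
      ψ (nndist (y (n + 1)) (y (n + 2))) (nndist (y (n + 1)) (y (n + 2))) ≤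
        φ (ψ (nndist (y n) (y (n + 1))) (nndist (y n) (y (n + 1)))) := by
  obtain ⟨m, rfl | rfl⟩ := Nat.even_or_odd' n
  · refine hψ.le_and_apply_le_of_apply_le_phi hφ
      (hψ.contractiveBound_le (le_max_left _ _) (le_max_left _ _) (le_max_right _ _) ?_) (h m m)
    simp
  · have hm := h m (m + 1)
    rw [show 2 * (m + 1) = 2 * m + 2 by ring, nndist_comm (y (2 * m + 2 + 1)),
      nndist_comm (y (2 * m + 2)) (y (2 * m + 1))] at hm
    refine hψ.le_and_apply_le_of_apply_le_phi hφ
      (hψ.contractiveBound_le (le_max_left _ _) (le_max_right _ _) (le_max_left _ _) ?_) hm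
    simp

theorem cauchySeq_of_contractiveAlong (hψ : ConditionA ψ) (hφ : InPhi φ)
    (h : ContractiveAlong ψ φ y) : CauchySeq y := by
  have hd : Tendsto (fun n => nndist (y n) (y (n + 1))) atTop (𝓝 0) :=
    hψ.tendsto_zero_of_apply_succ_le hφ (hψ.nndist_succ_le_of_contractiveAlong hφ h)
  by_contra hy
  obtain ⟨ε, hε, j, hj, hu⟩ := exists_tendsto_nndist_odd_even_of_not_cauchySeq hd hy
  have hdj : Tendsto (fun k => nndist (y (2 * j k)) (y (2 * j k + 1))) atTop (𝓝 0) :=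
    hd.comp (tendsto_atTop_mono (fun k => by grind) tendsto_id)
  have hdk : Tendsto (fun k => nndist (y (2 * k + 1)) (y (2 * k + 2))) atTop (𝓝 0) :=
    hd.comp (tendsto_atTop_mono (fun k => by grind) tendsto_id)
  have hp := hu.nndist_congr hdj hdk
  have hq := (hu.nndist_congr (u' := fun k => y (2 * j k + 1)) (by simp) hdk).congr
    fun k => nndist_comm _ _
  have hr := hu.nndist_congr (v' := fun k => y (2 * k + 2)) hdj (by simp)
  have hlim : ψ ε ε ≤ φ (ψ ε 0) := by
    -- the bound tends to `contractiveBound ψ ε 0 0 ε ε = ψ ε 0`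
    have := le_of_tendsto_of_tendsto' (hψ.1.tendsto_comp₂ hu hu)
      ((hφ.2.1.tendsto _).comp (tendsto_contractiveBound hψ.1 hp hdj hdk hq hr))
      fun k => h k (j k)
    simpa [contractiveBound, hψ.2.2.2.1] using this
  exact hε (hψ.eq_zero_of_apply_le_phi hφ hlim)

end ConditionA

theorem stmt_16_general {X : Type*} [MetricSpace X] (K : Set X)
    (A B S T : X → X)
    (ψ : ℝ≥0 → ℝ≥0 → ℝ≥0) (hψ : ConditionA ψ)
    (φ : ℝ≥0 → ℝ≥0) (hφ : InPhi φ)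
    (hcontr : ∀ x ∈ K, ∀ y ∈ K,
      ψ (nndist (S x) (T y)) (nndist (S x) (T y)) ≤
        φ (max (ψ (nndist (A x) (B y)) (nndist (A x) (S x)))
          (max (ψ (nndist (A x) (B y)) (nndist (B y) (T y)))
          (max (ψ (nndist (A x) (S x)) (nndist (B y) (T y)))
          (max (ψ (nndist (B y) (T y)) (nndist (A x) (S x)))
          (max (min (ψ (nndist (B y) (S x)) (nndist (A x) (S x)))
                    (ψ (nndist (A x) (T y)) (nndist (B y) (T y))))
               (min (ψ (nndist (B y) (S x)) (nndist (B y) (T y)))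
                    (ψ (nndist (A x) (T y)) (nndist (A x) (S x))))))))))
    (x : ℕ → X) (hx : ∀ n, x n ∈ K) (y : ℕ → X)
    (hy_even : ∀ n, y (2 * n) = T (x (2 * n)) ∧ T (x (2 * n)) = A (x (2 * n + 1)))
    (hy_odd : ∀ n, y (2 * n + 1) = S (x (2 * n + 1)) ∧
      S (x (2 * n + 1)) = B (x (2 * n + 2))) :
    CauchySeq y := by
  refine hψ.cauchySeq_of_contractiveAlong hφ fun i j => ?_
  have hT : y (2 * i + 2) = T (x (2 * i + 2)) := (hy_even (i + 1)).1
  have h := hcontr (x (2 * j + 1)) (hx _) (x (2 * i + 2)) (hx _)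
  rwa [← (hy_odd j).1, ← (hy_even j).2, ← (hy_even j).1, ← (hy_odd i).2, ← (hy_odd i).1,
    ← hT] at h

theorem stmt_16 {X : Type*} [MetricSpace X] (K : Set X) (hK : K.Nonempty)
    (A B S T : X → X)
    (hA : MapsTo A K K) (hB : MapsTo B K K) (hS : MapsTo S K K) (hT : MapsTo T K K)
    (ψ : ℝ≥0 → ℝ≥0 → ℝ≥0) (hψ : ConditionA ψ)
    (φ : ℝ≥0 → ℝ≥0) (hφ : InPhi φ)
    (hcontr : ∀ x ∈ K, ∀ y ∈ K,
      ψ (nndist (S x) (T y)) (nndist (S x) (T y)) ≤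
        φ (max (ψ (nndist (A x) (B y)) (nndist (A x) (S x)))
          (max (ψ (nndist (A x) (B y)) (nndist (B y) (T y)))
          (max (ψ (nndist (A x) (S x)) (nndist (B y) (T y)))
          (max (ψ (nndist (B y) (T y)) (nndist (A x) (S x)))
          (max (min (ψ (nndist (B y) (S x)) (nndist (A x) (S x)))
                    (ψ (nndist (A x) (T y)) (nndist (B y) (T y))))
               (min (ψ (nndist (B y) (S x)) (nndist (B y) (T y)))
                    (ψ (nndist (A x) (T y)) (nndist (A x) (S x))))))))))
    (x : ℕ → X) (hx : ∀ n, x n ∈ K) (y : ℕ → X)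
    (hy_even : ∀ n, y (2 * n) = T (x (2 * n)) ∧ T (x (2 * n)) = A (x (2 * n + 1)))
    (hy_odd : ∀ n, y (2 * n + 1) = S (x (2 * n + 1)) ∧
      S (x (2 * n + 1)) = B (x (2 * n + 2))) :
    CauchySeq y :=
  stmt_16_general K A B S T ψ hψ φ hφ hcontr x hx y hy_even hy_odd
end
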